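/- Let C'_1 be a set of objects with tag sets t_i ⊆ T, let M'_1 = |C'_1|, and let x'_1(j) ∈ [0,1] for j ∈ T satisfy ∑_{j∈t_i} x'_1(j) ≥ 1/2 for every s_i ∈ C'_1. Suppose each tag j is independently included in X_1 with probability x'_1(j), and let Y_1 = |{s_i ∈ C'_1 : t_i ∩ X_1 = ∅}| be the number of uncovered objects. If Δ + 1 ≤ 0.01·M'_1/ln n, where Δ = max_i |{i' : t_i ∩ t_{i'} ≠ ∅}|, then P(Y_1 > 0.86·M'_1) ≤ 1/n. -/

import Mathlib

/-!
Colour the objects greedily with `Δ + 1` colours so that objects of the same colour have disjoint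
tag sets. Within a colour class the events "object `i` is uncovered" are then independent, each of
probability at most `e^{-1/2} ≤ 2/3`, which gives a Poisson-type bound on the moment generating
function of the number of uncovered objects of that class. Hölder's inequality over the `Δ + 1`
classes bounds `E[exp (θ Y)]` for the whole count `Y`, and Chernoff's bound with
`θ = 10 ln n / M'` yields `P(Y > 0.86 M') ≤ e^{-ln n}`.
-/

open scoped Classical

open Finset Real

theorem exp_sub_one_le_mul {r : ℝ} (h0 : 0 ≤ r) (h1 : r ≤ 1) : exp r - 1 ≤ (1 + r) * r := by
  have := (abs_le.1 (abs_exp_sub_one_sub_id_le (by rwa [abs_of_nonneg h0]))).2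
  nlinarith

theorem prod_one_sub_le_exp_neg_sum {T : Type*} (x : T → ℝ) (U : Finset T)
    (hx1 : ∀ j ∈ U, x j ≤ 1) : ∏ j ∈ U, (1 - x j) ≤ exp (-∑ j ∈ U, x j) := by
  rw [← sum_neg_distrib, exp_sum]
  exact prod_le_prod (fun j hj => by linarith [hx1 j hj]) fun j _ => one_sub_le_exp_neg _

theorem prod_one_sub_le_two_thirds {T : Type*} {x : T → ℝ} {U : Finset T}
    (hx1 : ∀ j ∈ U, x j ≤ 1) (hsum : 1 / 2 ≤ ∑ j ∈ U, x j) : ∏ j ∈ U, (1 - x j) ≤ 2 / 3 :=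
  calc ∏ j ∈ U, (1 - x j) ≤ exp (-∑ j ∈ U, x j) := prod_one_sub_le_exp_neg_sum x U hx1
    _ ≤ exp (-(1 / 2)) := exp_le_exp.2 (neg_le_neg hsum)
    _ ≤ 2 / 3 := by
        rw [exp_neg]
        exact inv_le_of_inv_le₀ (by norm_num) (by linarith [add_one_le_exp (1 / 2 : ℝ)])

-- Hölder's inequality for the factors `exp (Z c)`, via Jensen applied to `exp (Z c / ρ c - B c)`.
theorem sum_mul_exp_sum_le {α ι : Type*} [Fintype α] {w : α → ℝ} (hw : ∀ a, 0 ≤ w a)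
    {s : Finset ι} {ρ : ι → ℝ} (hρ : ∀ c ∈ s, 0 < ρ c) (hρ1 : ∑ c ∈ s, ρ c = 1)
    (Z : ι → α → ℝ) (B : ι → ℝ) (hB : ∀ c ∈ s, ∑ a, w a * exp (Z c a / ρ c) ≤ exp (B c)) :
    ∑ a, w a * exp (∑ c ∈ s, Z c a) ≤ exp (∑ c ∈ s, ρ c * B c) := by
  have hjensen : ∀ a, exp (∑ c ∈ s, Z c a) ≤
      exp (∑ c ∈ s, ρ c * B c) * ∑ c ∈ s, ρ c * (exp (-B c) * exp (Z c a / ρ c)) := fun a => by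
    have hsplit : ∑ c ∈ s, Z c a = ∑ c ∈ s, ρ c * B c + ∑ c ∈ s, ρ c • (Z c a / ρ c - B c) := by
      rw [← sum_add_distrib]
      refine sum_congr rfl fun c hc => ?_
      rw [smul_eq_mul, mul_sub, mul_div_cancel₀ _ (hρ c hc).ne']
      ring
    rw [hsplit, exp_add]
    gcongr
    refine (convexOn_exp.map_sum_le (fun c hc => (hρ c hc).le) hρ1
      fun _ _ => Set.mem_univ _).trans ?_
    simp only [smul_eq_mul, sub_eq_neg_add, exp_add, le_refl]
  calc ∑ a, w a * exp (∑ c ∈ s, Z c a)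
      ≤ ∑ a, w a * (exp (∑ c ∈ s, ρ c * B c) *
          ∑ c ∈ s, ρ c * (exp (-B c) * exp (Z c a / ρ c))) :=
        sum_le_sum fun a _ => mul_le_mul_of_nonneg_left (hjensen a) (hw a)
    _ = exp (∑ c ∈ s, ρ c * B c) *
          ∑ c ∈ s, ρ c * (exp (-B c) * ∑ a, w a * exp (Z c a / ρ c)) := by
        simp_rw [mul_sum]
        rw [sum_comm]
        exact sum_congr rfl fun c _ => sum_congr rfl fun a _ => by ring
    _ ≤ exp (∑ c ∈ s, ρ c * B c) * ∑ c ∈ s, ρ c * (exp (-B c) * exp (B c)) := by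
        gcongr with c hc
        · exact (hρ c hc).le
        · exact hB c hc
    _ = exp (∑ c ∈ s, ρ c * B c) := by simp [← exp_add, hρ1]

theorem sum_filter_lt_le_exp_mul_sum {α : Type*} [Fintype α] {w : α → ℝ} (hw : ∀ a, 0 ≤ w a)
    (Y : α → ℝ) (y : ℝ) {θ : ℝ} (hθ : 0 ≤ θ) :
    ∑ a with y < Y a, w a ≤ exp (-(θ * y)) * ∑ a, w a * exp (θ * Y a) := by
  rw [mul_sum]
  calc ∑ a with y < Y a, w a
      ≤ ∑ a with y < Y a, exp (-(θ * y)) * (w a * exp (θ * Y a)) := by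
        refine sum_le_sum fun a ha => ?_
        have hy : θ * y ≤ θ * Y a := mul_le_mul_of_nonneg_left (mem_filter.1 ha).2.le hθ
        rw [mul_left_comm, ← exp_add]
        exact le_mul_of_one_le_right (hw a) (one_le_exp (by linarith))
    _ ≤ ∑ a, exp (-(θ * y)) * (w a * exp (θ * Y a)) :=
        sum_le_sum_of_subset_of_nonneg (filter_subset _ _) fun a _ _ => by
          have := hw a; positivity

theorem exists_fin_coloring_pairwiseDisjoint {S T : Type*} [Fintype S] [DecidableEq T]
    (t : S → Finset T) {Δ : ℕ}
    (hΔ : ∀ i, (univ.filter fun i' => (t i ∩ t i').Nonempty).card ≤ Δ) :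
    ∃ f : S → Fin (Δ + 1), ∀ c, (f ⁻¹' {c}).PairwiseDisjoint t := by
  suffices h : ∀ P : Finset S, ∃ f : S → Fin (Δ + 1),
      ∀ u ∈ P, ∀ v ∈ P, u ≠ v → f u = f v → Disjoint (t u) (t v) by
    obtain ⟨f, hf⟩ := h univ
    exact ⟨f, fun c u hu v hv huv => hf u (mem_univ u) v (mem_univ v) huv (hu.trans hv.symm)⟩
  intro P
  induction P using Finset.induction_on with
  | empty => exact ⟨fun _ => 0, by simp⟩
  | insert a P ha ih =>
    obtain ⟨f, hf⟩ := ih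
    obtain ⟨γ, hγ⟩ : ((univ.filter fun v => (t a ∩ t v).Nonempty).image f)ᶜ.Nonempty := by
      rw [← card_pos, card_compl, Fintype.card_fin]
      have := (card_image_le (f := f)).trans (hΔ a)
      omega
    have hfree : ∀ v ∈ P, f v = γ → Disjoint (t a) (t v) := fun v _ hfv => by
      rw [disjoint_iff_inter_eq_empty, ← not_nonempty_iff_eq_empty]
      exact fun hav => mem_compl.1 hγ (hfv ▸ mem_image_of_mem f (mem_filter.2 ⟨mem_univ v, hav⟩))
    have hfP : ∀ v ∈ P, Function.update f a γ v = f v := fun v hv =>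
      Function.update_of_ne (ne_of_mem_of_not_mem hv ha) _ _
    refine ⟨Function.update f a γ, fun u hu v hv huv hfuv => ?_⟩
    rcases mem_insert.1 hu with rfl | hu' <;> rcases mem_insert.1 hv with rfl | hv'
    · exact absurd rfl huv
    · exact hfree v hv' (by rw [← hfP v hv', ← hfuv, Function.update_self])
    · exact (hfree u hu' (by rw [← hfP u hu', hfuv, Function.update_self])).symm
    · exact hf u hu' v hv' huv (by rwa [hfP u hu', hfP v hv'] at hfuv)

section Bernoulli

variable {S T : Type*} [Fintype T]

def prodBernoulli (x : T → ℝ) (a : T → Bool) : ℝ :=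
  ∏ j, if a j then x j else 1 - x j

theorem prodBernoulli_nonneg {x : T → ℝ} (hx0 : ∀ j, 0 ≤ x j) (hx1 : ∀ j, x j ≤ 1)
    (a : T → Bool) : 0 ≤ prodBernoulli x a :=
  prod_nonneg fun j _ => by split_ifs <;> linarith [hx0 j, hx1 j]

variable [DecidableEq T]

theorem sum_prodBernoulli_mul_prod (x : T → ℝ) (U : Finset T) (h : T → Bool → ℝ) :
    ∑ a, prodBernoulli x a * ∏ j ∈ U, h j (a j) =
      ∏ j ∈ U, (x j * h j true + (1 - x j) * h j false) := by
  have hfactor : ∀ a : T → Bool, prodBernoulli x a * ∏ j ∈ U, h j (a j) =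
      ∏ j, (if a j then x j else 1 - x j) * (if j ∈ U then h j (a j) else 1) := fun a => by
    rw [prod_mul_distrib, prod_ite_mem, univ_inter, prodBernoulli]
  simp_rw [hfactor]
  rw [← Fintype.prod_sum fun j b => (if b then x j else 1 - x j) * (if j ∈ U then h j b else 1),
    ← univ_inter U, ← prod_ite_mem]
  refine prod_congr rfl fun j _ => ?_
  by_cases hj : j ∈ U <;> simp [hj]

theorem sum_prodBernoulli_mul_prod_prod (x : T → ℝ) (t : S → Finset T) {K : Finset S}
    (hK : (K : Set S).PairwiseDisjoint t) (h : T → Bool → ℝ) :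
    ∑ a, prodBernoulli x a * ∏ i ∈ K, ∏ j ∈ t i, h j (a j) =
      ∏ i ∈ K, ∏ j ∈ t i, (x j * h j true + (1 - x j) * h j false) := by
  simp_rw [← prod_biUnion hK]
  exact sum_prodBernoulli_mul_prod x _ h

theorem sum_prodBernoulli_mul_prod_one_add (x : T → ℝ) (t : S → Finset T) {I : Finset S}
    (hI : (I : Set S).PairwiseDisjoint t) (h : T → Bool → ℝ) (c : ℝ) :
    ∑ a, prodBernoulli x a * ∏ i ∈ I, (1 + c * ∏ j ∈ t i, h j (a j)) =
      ∏ i ∈ I, (1 + c * ∏ j ∈ t i, (x j * h j true + (1 - x j) * h j false)) := by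
  simp_rw [prod_one_add, mul_sum, prod_mul_distrib, prod_const]
  rw [sum_comm]
  refine sum_congr rfl fun K hK => ?_
  simp_rw [mul_left_comm _ (c ^ _), ← mul_sum]
  rw [sum_prodBernoulli_mul_prod_prod x t (hI.subset (mem_powerset.1 hK)) h]

theorem sum_prodBernoulli_mul_exp_card_uncovered_le {x : T → ℝ} (hx1 : ∀ j, x j ≤ 1)
    (t : S → Finset T) {I : Finset S} (hI : (I : Set S).PairwiseDisjoint t) {q : ℝ}
    (hq : ∀ i ∈ I, ∏ j ∈ t i, (1 - x j) ≤ q) {r : ℝ} (hr : 0 ≤ r) :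
    ∑ a, prodBernoulli x a * exp (r * #{i ∈ I | ∀ j ∈ t i, a j = false}) ≤
      exp (#I * ((exp r - 1) * q)) := by
  have hc : 0 ≤ exp r - 1 := by linarith [one_le_exp hr]
  have hexp : ∀ a : T → Bool, exp (r * #{i ∈ I | ∀ j ∈ t i, a j = false}) =
      ∏ i ∈ I, (1 + (exp r - 1) * ∏ j ∈ t i, if a j = false then 1 else 0) := fun a => by
    rw [natCast_card_filter, mul_sum, exp_sum]
    refine prod_congr rfl fun i _ => ?_
    rw [prod_boole]
    split_ifs <;> simp
  simp_rw [hexp]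
  rw [sum_prodBernoulli_mul_prod_one_add x t hI fun _ b => if b = false then 1 else 0]
  simp only [Bool.true_eq_false, if_false, if_true, mul_zero, mul_one, zero_add]
  calc ∏ i ∈ I, (1 + (exp r - 1) * ∏ j ∈ t i, (1 - x j))
      ≤ ∏ _i ∈ I, exp ((exp r - 1) * q) := by
        refine prod_le_prod (fun i _ => ?_) fun i hi => ?_
        · have := prod_nonneg fun j (_ : j ∈ t i) => sub_nonneg.2 (hx1 j)
          positivity
        · calc 1 + (exp r - 1) * ∏ j ∈ t i, (1 - x j) ≤ 1 + (exp r - 1) * q := by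
                gcongr; exact hq i hi
            _ ≤ exp ((exp r - 1) * q) := by linarith [add_one_le_exp ((exp r - 1) * q)]
    _ = exp (#I * ((exp r - 1) * q)) := by rw [prod_const, exp_nat_mul]

theorem sum_prodBernoulli_mul_exp_card_uncovered_le_of_coloring {ι : Type*} [Fintype ι]
    [Nonempty ι] {x : T → ℝ} (hx0 : ∀ j, 0 ≤ x j) (hx1 : ∀ j, x j ≤ 1) (t : S → Finset T)
    (C : Finset S) {f : S → ι} (hf : ∀ c, (f ⁻¹' {c}).PairwiseDisjoint t) {q : ℝ}
    (hq : ∀ i ∈ C, ∏ j ∈ t i, (1 - x j) ≤ q) {θ : ℝ} (hθ : 0 ≤ θ) :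
    ∑ a, prodBernoulli x a * exp (θ * #{i ∈ C | ∀ j ∈ t i, a j = false}) ≤
      exp (#C * ((exp (Fintype.card ι * θ) - 1) * q) / Fintype.card ι) := by
  have hk : (0 : ℝ) < Fintype.card ι := by exact_mod_cast Fintype.card_pos
  have hfiber : ∀ D : Finset S, (#D : ℝ) = ∑ c, (#{i ∈ D | f i = c} : ℝ) := fun D => by
    rw [card_eq_sum_card_fiberwise (f := f) (t := univ) fun i _ => mem_coe.2 (mem_univ (f i))]
    push_cast
    rfl
  have hsplit : ∀ a : T → Bool, θ * #{i ∈ C | ∀ j ∈ t i, a j = false} =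
      ∑ c, θ * #{i ∈ {i ∈ C | f i = c} | ∀ j ∈ t i, a j = false} := fun a => by
    rw [hfiber, mul_sum]
    exact sum_congr rfl fun c _ => by rw [filter_comm]
  simp_rw [hsplit]
  refine (sum_mul_exp_sum_le (prodBernoulli_nonneg hx0 hx1) (s := univ)
    (ρ := fun _ => 1 / Fintype.card ι) (fun _ _ => by positivity) (by simp [hk.ne']) _
    (fun c => #{i ∈ C | f i = c} * ((exp (Fintype.card ι * θ) - 1) * q))
    fun c _ => ?_).trans_eq ?_
  · have hclass : (({i ∈ C | f i = c} : Finset S) : Set S).PairwiseDisjoint t :=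
      (hf c).subset fun i hi => (mem_filter.1 hi).2
    convert sum_prodBernoulli_mul_exp_card_uncovered_le hx1 t hclass
      (fun i hi => hq i (mem_filter.1 hi).1) (r := Fintype.card ι * θ) (by positivity)
      using 4 with a
    rw [one_div, div_inv_eq_mul]
    ring
  · rw [← mul_sum, ← sum_mul, ← hfiber]
    ring_nf

theorem sum_prodBernoulli_card_uncovered_gt_le {ι : Type*} [Fintype ι] [Nonempty ι]
    {x : T → ℝ} (hx0 : ∀ j, 0 ≤ x j) (hx1 : ∀ j, x j ≤ 1)
    (t : S → Finset T) (C : Finset S) {f : S → ι} (hf : ∀ c, (f ⁻¹' {c}).PairwiseDisjoint t)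
    {q : ℝ} (hq : ∀ i ∈ C, ∏ j ∈ t i, (1 - x j) ≤ q) {θ : ℝ} (hθ : 0 ≤ θ) (y : ℝ) :
    ∑ a with y < #{i ∈ C | ∀ j ∈ t i, a j = false}, prodBernoulli x a ≤
      exp (-(θ * y) + #C * ((exp (Fintype.card ι * θ) - 1) * q) / Fintype.card ι) := by
  rw [exp_add]
  exact (sum_filter_lt_le_exp_mul_sum (prodBernoulli_nonneg hx0 hx1) _ y hθ).trans
    (mul_le_mul_of_nonneg_left
      (sum_prodBernoulli_mul_exp_card_uncovered_le_of_coloring hx0 hx1 t C hf hq hθ)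
      (exp_pos _).le)

end Bernoulli

theorem tail_exponent_le {k L M : ℝ} (hk : 0 < k) (hL : 0 < L) (hM : 100 * k * L ≤ M) :
    -(10 * L / M * (0.86 * M)) + M * ((exp (k * (10 * L / M)) - 1) * (2 / 3)) / k ≤ -L := by
  have hM0 : 0 < M := lt_of_lt_of_le (by positivity) hM
  set θ := 10 * L / M with hθ
  have hθM : θ * M = 10 * L := div_mul_cancel₀ _ hM0.ne'
  have hkθ0 : 0 ≤ k * θ := by positivity
  have hkθ : k * θ ≤ 1 / 10 := by
    rw [hθ, mul_div_assoc', div_le_iff₀ hM0]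
    linarith
  have hexp : exp (k * θ) - 1 ≤ 11 / 10 * (k * θ) :=
    (exp_sub_one_le_mul hkθ0 (by linarith)).trans
      (mul_le_mul_of_nonneg_right (by linarith) hkθ0)
  have hmean : M * ((exp (k * θ) - 1) * (2 / 3)) / k ≤ 22 / 3 * L := by
    rw [div_le_iff₀ hk]
    nlinarith [mul_le_mul_of_nonneg_left hexp hM0.le]
  nlinarith

theorem stmt10 {S T : Type*} [Fintype S] [Fintype T] [DecidableEq T]
    (C' : Finset S) (t : S → Finset T)
    (x' : T → ℝ) (hx0 : ∀ j, 0 ≤ x' j) (hx1 : ∀ j, x' j ≤ 1)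
    (hsum : ∀ i ∈ C', (1 : ℝ) / 2 ≤ ∑ j ∈ t i, x' j)
    (Δ : ℕ)
    (hΔ : ∀ i : S, ((Finset.univ.filter fun i' : S => (t i ∩ t i').Nonempty).card ≤ Δ))
    (n : ℕ) (hn : 3 ≤ n)
    (hΔb : ((Δ : ℝ) + 1) ≤ 0.01 * (C'.card : ℝ) / Real.log n)
    (prob : (T → Bool) → ℝ)
    (hprob : ∀ a, prob a = ∏ j, (if a j then x' j else 1 - x' j)) :
    ∑ a ∈ Finset.univ.filter (fun a : T → Bool =>
        0.86 * (C'.card : ℝ) < ((C'.filter fun i => ∀ j ∈ t i, a j = false).card : ℝ)),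
      prob a ≤ 1 / (n : ℝ) := by
  obtain rfl : prob = prodBernoulli x' := funext hprob
  have hL : 0 < log n := log_pos (by exact_mod_cast (by omega : 1 < n))
  have hM : 100 * (Δ + 1) * log n ≤ #C' := by linarith [(le_div_iff₀ hL).1 hΔb]
  obtain ⟨f, hf⟩ := exists_fin_coloring_pairwiseDisjoint t hΔ
  have htail := sum_prodBernoulli_card_uncovered_gt_le hx0 hx1 t C' hf
    (fun i hi => prod_one_sub_le_two_thirds (fun j _ => hx1 j) (hsum i hi))
    (θ := 10 * log n / #C') (by positivity) (0.86 * #C')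
  push_cast [Fintype.card_fin] at htail
  calc _ ≤ _ := htail
    _ ≤ exp (-log n) := exp_le_exp.2 (tail_exponent_le (by positivity) hL hM)
    _ = 1 / n := by rw [exp_neg, exp_log (by positivity), one_div]
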